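/- arXiv:1701.04180 — 4 statements merged into one kernel-verified Lean document; each statement's English description precedes it below -/
import Mathlib

section
/- Let C be a Type II self-dual additive (10,2^10) code over GF(4) of minimum weight 4. Then ρ_B(C) = Ĉ + (d_4^{10})_0 + e_B is a doubly-even self-dual binary [40,20,8] code: it has 𝔽₂-dimension 20, equals its dual under the standard inner product on 𝔽₂^40, every codeword has weight divisible by 4, and its minimum nonzero Hamming weight is 8. -/
open scoped BigOperators

section Defs

variable {F : Type} [Field F] [DecidableEq F]

/-- The binary coordinate in column `j` (0-indexed), row `k`. -/
def idx (j : Fin 10) (k : Fin 4) : Fin 40 :=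
  ⟨4 * j.val + k.val, by have := j.isLt; have := k.isLt; omega⟩

/-- The map φ : GF(4) → 𝔽₂⁴, 0↦0000, 1↦0011, ω↦0101, ϖ↦0110. -/
def phi (ω : F) : F → (Fin 4 → ZMod 2) := fun x =>
  if x = 0 then ![0, 0, 0, 0]
  else if x = 1 then ![0, 0, 1, 1]
  else if x = ω then ![0, 1, 0, 1]
  else ![0, 1, 1, 0]

/-- Ĉ : the image of a quaternary code under coordinatewise φ. -/
def hatSet (ω : F) (C : Set (Fin 10 → F)) : Set (Fin 40 → ZMod 2) :=
  { v | ∃ c ∈ C, ∀ (j : Fin 10) (k : Fin 4), v (idx j k) = phi ω (c j) k }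

/-- d₄¹⁰ : binary vectors of length 40 constant on each of the ten columns. -/
def d4ten : Set (Fin 40 → ZMod 2) :=
  { v | ∀ (j : Fin 10) (k k' : Fin 4), v (idx j k) = v (idx j k') }

/-- (d₄¹⁰)₀ : the subcode of d₄¹⁰ of codewords of weight divisible by 8. -/
def d4ten0 : Set (Fin 40 → ZMod 2) :=
  { v | v ∈ d4ten ∧ 8 ∣ hammingNorm v }

/-- The generator 1000 1000 ... 1000 of e_C. -/
def eCvec : Fin 40 → ZMod 2 := fun i => if i.val % 4 = 0 then 1 else 0

/-- The generator 1000 (×9) 0111 of e_B. -/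
def eBvec : Fin 40 → ZMod 2 := fun i =>
  if i.val < 36 then (if i.val % 4 = 0 then 1 else 0)
  else (if i.val % 4 = 0 then 0 else 1)

/-- ρ_C(C) = Ĉ + (d₄¹⁰)₀ + e_C. -/
def rhoC (ω : F) (C : Set (Fin 10 → F)) : Set (Fin 40 → ZMod 2) :=
  { v | ∃ a ∈ hatSet ω C, ∃ b ∈ d4ten0,
      ∃ e ∈ ({0, eCvec} : Set (Fin 40 → ZMod 2)), v = a + b + e }

/-- ρ_B(C) = Ĉ + (d₄¹⁰)₀ + e_B. -/
def rhoB (ω : F) (C : Set (Fin 10 → F)) : Set (Fin 40 → ZMod 2) :=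
  { v | ∃ a ∈ hatSet ω C, ∃ b ∈ d4ten0,
      ∃ e ∈ ({0, eBvec} : Set (Fin 40 → ZMod 2)), v = a + b + e }

/-- The trace inner product x⋆y = Σ Tr(xᵢ ȳᵢ), computed in GF(4) (its value lies
in the prime subfield GF(2)). -/
def traceIP (x y : Fin 10 → F) : F :=
  ∑ i, ((x i * (y i) ^ 2) + (x i * (y i) ^ 2) ^ 2)

/-- The dual of an additive code with respect to the trace inner product. -/
def addDual (C : Set (Fin 10 → F)) : Set (Fin 10 → F) :=
  { x | ∀ c ∈ C, traceIP x c = 0 }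

/-- The dual of a binary code of length 40 under the standard inner product. -/
def binDual (S : Set (Fin 40 → ZMod 2)) : Set (Fin 40 → ZMod 2) :=
  { x | ∀ c ∈ S, ∑ i, x i * c i = 0 }

/-- The dual of a quaternary code under the Hermitian inner product ⟨x,y⟩ = Σ xᵢ ȳᵢ. -/
def hermDual (S : Set (Fin 10 → F)) : Set (Fin 10 → F) :=
  { x | ∀ c ∈ S, ∑ i, x i * (c i) ^ 2 = 0 }

/-- The Hermitian self-dual [10,5,4] code E₁₀ over GF(4). -/
def E10 (ω : F) : Submodule F (Fin 10 → F) :=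
  Submodule.span F {![1,1,1,1,0,0,0,0,0,0], ![0,0,1,1,1,1,0,0,0,0],
    ![0,0,0,0,1,1,1,1,0,0], ![0,0,0,0,0,0,1,1,1,1],
    ![1,0,1,0,1,0,1,0,ω,ω^2]}

/-- The Hermitian self-dual [10,5,4] code B₁₀ over GF(4). -/
def B10 (ω : F) : Submodule F (Fin 10 → F) :=
  Submodule.span F {![1,1,1,1,0,0,0,0,0,0], ![0,1,ω,ω^2,1,0,0,0,0,0],
    ![0,0,0,0,0,1,1,1,1,0], ![0,0,0,0,0,0,1,ω,ω^2,1],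
    ![0,1,ω^2,ω,0,0,1,ω^2,ω,0]}

/-- Interpret a bit as an element of GF(4). -/
def b2f (x : ZMod 2) : F := if x = 1 then 1 else 0

/-- The projection 𝔽₂⁴⁰ → GF(4)¹⁰ : column j ↦ v₂ᵢₙ·1 + v·ω + v·ϖ with row labels 0,1,ω,ϖ. -/
def Proj (ω : F) (v : Fin 40 → ZMod 2) : Fin 10 → F := fun j =>
  b2f (v (idx j 1)) * 1 + b2f (v (idx j 2)) * ω + b2f (v (idx j 3)) * ω ^ 2

/-- The parity of column j (1 = odd number of ones). -/
def colPar (v : Fin 40 → ZMod 2) (j : Fin 10) : ZMod 2 := ∑ k, v (idx j k)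

/-- The parity of the top row (1 = odd number of ones). -/
def topPar (v : Fin 40 → ZMod 2) : ZMod 2 := ∑ j, v (idx j 0)

/-- The coordinate permutation of Fin 10 permuting the five blocks {2m, 2m+1}
as units according to π, preserving order within blocks. -/
def blockPerm (π : Equiv.Perm (Fin 5)) : Fin 10 → Fin 10 := fun t =>
  ⟨2 * (π ⟨t.val / 2, by have := t.isLt; omega⟩).val + t.val % 2, by
    have := (π ⟨t.val / 2, by have := t.isLt; omega⟩).isLt; have := t.isLt; omega⟩

/-- The coordinate permutation of Fin 10 interchanging the two coordinates within
each block belonging to S, fixing all other coordinates. -/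
def blockSwap (S : Finset (Fin 5)) : Fin 10 → Fin 10 := fun t =>
  if (⟨t.val / 2, by have := t.isLt; omega⟩ : Fin 5) ∈ S then
    ⟨2 * (t.val / 2) + (1 - t.val % 2), by have := t.isLt; omega⟩
  else t

end Defs

/-!
Column by column, a codeword of `ρ_B(C)` is `φ(c_j) + β_j·1111 + ε·(e_B)_j` with `c ∈ C`,
`∑ β_j = 0` and `ε ∈ 𝔽₂`. Column parities recover `ε`, top rows then recover `β`, and `φ` is
injective, so `|ρ_B(C)| = 2^10 · 2^9 · 2 = 2^20`.

Columnwise `φ(x) · φ(y) = Tr(x ȳ)`, so trace self-duality of `C` makes `ρ_B(C)` self-orthogonal,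
hence self-dual by dimension. Weights: `wt φ̂(c) = 2 wt c ≡ 0 mod 4` by Type II, and
`wt (x + y) = wt x + wt y - 2 |x ∩ y|` keeps doubly-evenness along orthogonal sums. For the minimum
weight: if `ε = 1` all ten columns have odd weight; otherwise every nonzero `c_j` contributes a
column of weight `2`, and `c = 0` leaves a nonzero word of `(d₄¹⁰)₀`.
-/

open Finset

theorem zmod_two_eq_zero_or_one (a : ZMod 2) : a = 0 ∨ a = 1 := by
  revert a; decide

section Binary

variable {ι : Type} [Fintype ι]

theorem hammingNorm_eq_sum {R : Type} [Zero R] [DecidableEq R] (v : ι → R) :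
    hammingNorm v = ∑ i, if v i ≠ 0 then 1 else 0 := by
  rw [hammingNorm, card_filter]

theorem natCast_hammingNorm (v : ι → ZMod 2) : (hammingNorm v : ZMod 2) = ∑ i, v i := by
  rw [hammingNorm_eq_sum, Nat.cast_sum]
  refine sum_congr rfl fun i _ => ?_
  rcases zmod_two_eq_zero_or_one (v i) with h | h <;> simp [h]

theorem hammingNorm_add_add_two_mul (x y : ι → ZMod 2) :
    hammingNorm (x + y) + 2 * hammingNorm (x * y) = hammingNorm x + hammingNorm y := by
  simp only [hammingNorm_eq_sum, mul_sum, ← sum_add_distrib]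
  refine sum_congr rfl fun i _ => ?_
  have key : ∀ a b : ZMod 2, ((if a + b ≠ 0 then 1 else 0) + 2 * if a * b ≠ 0 then 1 else 0) =
      (if a ≠ 0 then 1 else 0) + if b ≠ 0 then 1 else 0 := by decide
  exact key (x i) (y i)

theorem four_dvd_hammingNorm_add {x y : ι → ZMod 2} (hxy : x ⬝ᵥ y = 0)
    (hx : 4 ∣ hammingNorm x) (hy : 4 ∣ hammingNorm y) : 4 ∣ hammingNorm (x + y) := by
  have h2 : 2 ∣ hammingNorm (x * y) := by
    rw [← ZMod.natCast_eq_zero_iff, natCast_hammingNorm]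
    exact hxy
  have := hammingNorm_add_add_two_mul x y
  omega

end Binary

section LinearAlgebra

theorem coe_span_zmod_two_eq_self {M : Type} [AddCommGroup M] [Module (ZMod 2) M] {S : Set M}
    (h0 : 0 ∈ S) (hadd : ∀ x ∈ S, ∀ y ∈ S, x + y ∈ S) :
    (Submodule.span (ZMod 2) S : Set M) = S := by
  let W : Submodule (ZMod 2) M :=
    { carrier := S
      add_mem' := fun {x y} hx hy => hadd x hx y hy
      zero_mem' := h0
      smul_mem' := fun r x hx => by
        rcases zmod_two_eq_zero_or_one r with rfl | rfl
        · simpa using h0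
        · simpa using hx }
  exact congrArg SetLike.coe (Submodule.span_eq W)

theorem dotProductBilin_nondegenerate (K ι : Type) [Field K] [Fintype ι] [DecidableEq ι] :
    (dotProductBilin K K : LinearMap.BilinForm K (ι → K)).Nondegenerate := by
  constructor
  · intro x hx
    funext i
    simpa using hx (Pi.single i 1)
  · intro y hy
    funext i
    simpa using hy (Pi.single i 1)

theorem coe_eq_setOf_dotProduct_eq_zero {K ι : Type} [Field K] [Fintype ι] [DecidableEq ι]
    {W : Submodule K (ι → K)} (hW : ∀ x ∈ W, ∀ y ∈ W, x ⬝ᵥ y = 0)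
    (hdim : 2 * Module.finrank K W = Fintype.card ι) :
    (W : Set (ι → K)) = {x | ∀ y ∈ W, x ⬝ᵥ y = 0} := by
  let B : LinearMap.BilinForm K (ι → K) := dotProductBilin K K
  have hle : W ≤ B.orthogonal W := fun x hx y hy => hW y hy x hx
  have hfin : Module.finrank K (B.orthogonal W) ≤ Module.finrank K W := by
    rw [LinearMap.BilinForm.finrank_orthogonal (dotProductBilin_nondegenerate K ι),
      Module.finrank_fintype_fun_eq_card]
    omega
  have hWo := Submodule.eq_of_le_of_finrank_le hle hfin
  refine Set.ext fun x => ⟨fun hx y hy => hW x hx y hy, fun hx => ?_⟩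
  have hxo : x ∈ B.orthogonal W := fun y hy => (dotProduct_comm y x).trans (hx y hy)
  rwa [← hWo] at hxo

theorem finrank_eq_of_natCard_eq_pow {K V : Type} [Field K] [Finite K] [AddCommGroup V]
    [Module K V] [Module.Finite K V] {n : ℕ} (h : Nat.card V = Nat.card K ^ n) :
    Module.finrank K V = n :=
  Nat.pow_right_injective Finite.one_lt_card (Module.natCard_eq_pow_finrank.symm.trans h)

def sumEqZeroEquiv (R : Type) [AddCommGroup R] (n : ℕ) :
    {β : Fin (n + 1) → R | ∑ j, β j = 0} ≃ (Fin n → R) where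
  toFun β := Fin.init β.1
  invFun h := ⟨Fin.snoc h (-∑ i, h i), by simp [Fin.sum_univ_castSucc]⟩
  left_inv β := by
    ext j
    refine Fin.lastCases ?_ (fun i => ?_) j
    · have : ∑ j, β.1 j = 0 := β.2
      rw [Fin.sum_univ_castSucc] at this
      simp [Fin.init, eq_neg_of_add_eq_zero_left this]
    · simp [Fin.init]
  right_inv h := by simp

end LinearAlgebra

section Columns

variable {α β ι R : Type} (e : α × β ≃ ι)

def ofCols (w : α → β → R) : ι → R := fun i => Function.uncurry w (e.symm i)

@[simp] theorem ofCols_apply_equiv (w : α → β → R) (a : α) (b : β) :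
    ofCols e w (e (a, b)) = w a b := by
  simp [ofCols]

variable [Fintype α] [Fintype β] [Fintype ι]

theorem sum_ofCols [AddCommMonoid R] (w : α → β → R) :
    ∑ i, ofCols e w i = ∑ a, ∑ b, w a b := by
  rw [← e.sum_comp, Fintype.sum_prod_type]
  simp

theorem dotProduct_ofCols [NonUnitalNonAssocSemiring R] (v w : α → β → R) :
    ofCols e v ⬝ᵥ ofCols e w = ∑ a, v a ⬝ᵥ w a :=
  sum_ofCols e fun a b => v a b * w a b

theorem hammingNorm_ofCols [Zero R] [DecidableEq R] (w : α → β → R) :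
    hammingNorm (ofCols e w) = ∑ a, hammingNorm (w a) := by
  simp only [hammingNorm_eq_sum]
  exact sum_ofCols e fun a b => if w a b ≠ 0 then 1 else 0

end Columns

section Layout

def colEquiv : Fin 10 × Fin 4 ≃ Fin 40 := finProdFinEquiv.trans (finCongr rfl)

theorem colEquiv_apply (j : Fin 10) (k : Fin 4) : colEquiv (j, k) = idx j k := by
  ext
  simp only [colEquiv, Equiv.trans_apply, finCongr_apply, Fin.val_cast, finProdFinEquiv_apply_val,
    idx]
  omega

theorem eq_ofCols {R : Type} (v : Fin 40 → R) : v = ofCols colEquiv fun j k => v (idx j k) := by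
  funext i
  obtain ⟨⟨j, k⟩, rfl⟩ := colEquiv.surjective i
  rw [ofCols_apply_equiv, colEquiv_apply]

def eBcol (j : Fin 10) : Fin 4 → ZMod 2 := if j = 9 then ![0, 1, 1, 1] else ![1, 0, 0, 0]

theorem eBvec_eq_ofCols : eBvec = ofCols colEquiv eBcol := by decide

theorem hammingNorm_eBvec : hammingNorm eBvec = 12 := by decide

theorem eBvec_dotProduct_eBvec : eBvec ⬝ᵥ eBvec = 0 := by decide

end Layout

section GF4

variable {F : Type} [Field F] [Fintype F] {ω : F}

theorem two_eq_zero_of_card_eq_four (hF : Fintype.card F = 4) : (2 : F) = 0 := by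
  have h4 : ((4 : ℕ) : F) = 0 := hF ▸ FiniteField.cast_card_eq_zero F
  exact mul_self_eq_zero.mp (by norm_num at h4 ⊢; linear_combination h4)

theorem eq_zero_or_one_or_omega_or_omega_sq (hF : Fintype.card F = 4) (hω : ω ^ 2 = ω + 1)
    (x : F) : x = 0 ∨ x = 1 ∨ x = ω ∨ x = ω ^ 2 := by
  classical
  have h2 := two_eq_zero_of_card_eq_four hF
  have hall : ({0, 1, ω, ω ^ 2} : Finset F) = univ := by
    apply eq_univ_of_card
    rw [hF, card_insert_of_notMem, card_insert_of_notMem, card_insert_of_notMem,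
      card_singleton] <;> simp only [mem_insert, mem_singleton, not_or] <;> grind
  have hx : x ∈ ({0, 1, ω, ω ^ 2} : Finset F) := hall ▸ mem_univ x
  simpa using hx

end GF4

section Phi

variable {F : Type} [Field F] [DecidableEq F] {ω : F}

@[simp] theorem phi_zero : phi ω (0 : F) = 0 := by
  ext k; fin_cases k <;> simp [phi]

@[simp] theorem phi_one : phi ω (1 : F) = ![0, 0, 1, 1] := by simp [phi]

theorem phi_apply_zero (x : F) : phi ω x 0 = 0 := by
  unfold phi; split_ifs <;> rfl

theorem sum_phi (x : F) : ∑ k, phi ω x k = 0 := by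
  unfold phi; split_ifs <;> decide

theorem eq_zero_of_phi_eq_zero {x : F} (h : phi ω x = 0) : x = 0 := by
  unfold phi at h
  split_ifs at h with h0
  · exact h0
  all_goals first | simpa using congrFun h 1 | simpa using congrFun h 2

theorem hammingNorm_phi {x : F} (hx : x ≠ 0) : hammingNorm (phi ω x) = 2 := by
  unfold phi; split_ifs <;> first | contradiction | decide

theorem hammingNorm_phi_add_const {x : F} (hx : x ≠ 0) (b : ZMod 2) :
    hammingNorm (phi ω x + fun _ => b) = 2 := by
  unfold phi; split_ifs <;> first | contradiction | (revert b; decide)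

theorem phi_dotProduct_const (x : F) (b : ZMod 2) : phi ω x ⬝ᵥ (fun _ => b) = 0 := by
  unfold phi; split_ifs <;> revert b <;> decide

theorem phi_dotProduct_eBcol (x : F) (j : Fin 10) : phi ω x ⬝ᵥ eBcol j = 0 := by
  unfold phi eBcol; split_ifs <;> decide

theorem sum_phi_add_const_add_smul_eBcol (x : F) (b ε : ZMod 2) (j : Fin 10) :
    ∑ k, (phi ω x + (fun _ => b) + ε • eBcol j : Fin 4 → ZMod 2) k = ε := by
  simp only [Pi.add_apply, Pi.smul_apply, smul_eq_mul, sum_add_distrib, sum_phi, ← mul_sum]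
  unfold eBcol; split_ifs <;> revert b ε <;> decide

variable [Fintype F] (hF : Fintype.card F = 4) (hω : ω ^ 2 = ω + 1)
include hF hω

theorem phi_omega : phi ω ω = ![0, 1, 0, 1] := by
  have h2 := two_eq_zero_of_card_eq_four hF
  have h0 : ω ≠ 0 := by grind
  have h1 : ω ≠ 1 := by grind
  simp [phi, h0, h1]

theorem phi_omega_sq : phi ω (ω ^ 2) = ![0, 1, 1, 0] := by
  have h2 := two_eq_zero_of_card_eq_four hF
  have h0 : ω ^ 2 ≠ 0 := by grind
  have h1 : ω ^ 2 ≠ 1 := by grind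
  have hω' : ω ^ 2 ≠ ω := by grind
  simp [phi, h0, h1, hω']

theorem phi_add (x y : F) : phi ω (x + y) = phi ω x + phi ω y := by
  have h2 := two_eq_zero_of_card_eq_four hF
  rcases eq_zero_or_one_or_omega_or_omega_sq hF hω (x + y) with h | h | h | h <;> rw [h] <;>
  rcases eq_zero_or_one_or_omega_or_omega_sq hF hω x with rfl | rfl | rfl | rfl <;>
  rcases eq_zero_or_one_or_omega_or_omega_sq hF hω y with rfl | rfl | rfl | rfl <;>
  first
  | (exfalso; grind)
  | (simp only [phi_zero, phi_one, phi_omega hF hω, phi_omega_sq hF hω]; decide)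

theorem cast_dotProduct_phi (x y : F) :
    ((phi ω x ⬝ᵥ phi ω y : ZMod 2).cast : F) = x * y ^ 2 + (x * y ^ 2) ^ 2 := by
  have h2 := two_eq_zero_of_card_eq_four hF
  have := CharTwo.of_one_ne_zero_of_two_eq_zero one_ne_zero h2
  generalize hd : phi ω x ⬝ᵥ phi ω y = d
  rcases eq_zero_or_one_or_omega_or_omega_sq hF hω x with rfl | rfl | rfl | rfl <;>
  rcases eq_zero_or_one_or_omega_or_omega_sq hF hω y with rfl | rfl | rfl | rfl <;>
  simp only [phi_zero, phi_one, phi_omega hF hω, phi_omega_sq hF hω] at hd <;>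
  rcases zmod_two_eq_zero_or_one d with rfl | rfl
  all_goals first
  | (exfalso; revert hd; decide)
  | (simp only [ZMod.cast_zero, ZMod.cast_one']; grind)

end Phi

section Code

variable {F : Type} [Field F] [DecidableEq F] (ω : F)

def phiVec (c : Fin 10 → F) : Fin 40 → ZMod 2 := ofCols colEquiv fun j => phi ω (c j)

def d4Vec (β : Fin 10 → ZMod 2) : Fin 40 → ZMod 2 := ofCols colEquiv fun j (_ : Fin 4) => β j

theorem hammingNorm_phiVec (c : Fin 10 → F) : hammingNorm (phiVec ω c) = 2 * hammingNorm c := by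
  rw [phiVec, hammingNorm_ofCols, hammingNorm_eq_sum c, mul_sum]
  refine sum_congr rfl fun j _ => ?_
  by_cases h : c j = 0
  · simp [h]
  · simp [h, hammingNorm_phi h]

theorem hammingNorm_d4Vec (β : Fin 10 → ZMod 2) : hammingNorm (d4Vec β) = 4 * hammingNorm β := by
  rw [d4Vec, hammingNorm_ofCols, hammingNorm_eq_sum β, mul_sum]
  refine sum_congr rfl fun j _ => ?_
  by_cases h : β j = 0 <;> simp [h, hammingNorm]

theorem phiVec_dotProduct_d4Vec (c : Fin 10 → F) (β : Fin 10 → ZMod 2) :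
    phiVec ω c ⬝ᵥ d4Vec β = 0 := by
  simp [phiVec, d4Vec, dotProduct_ofCols, phi_dotProduct_const]

theorem phiVec_dotProduct_eBvec (c : Fin 10 → F) : phiVec ω c ⬝ᵥ eBvec = 0 := by
  simp [phiVec, eBvec_eq_ofCols, dotProduct_ofCols, phi_dotProduct_eBcol]

theorem d4Vec_dotProduct_d4Vec (β β' : Fin 10 → ZMod 2) : d4Vec β ⬝ᵥ d4Vec β' = 0 := by
  simp only [d4Vec, dotProduct_ofCols]
  refine sum_eq_zero fun j _ => ?_
  generalize β j = a
  generalize β' j = b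
  revert a b; decide

theorem d4Vec_dotProduct_eBvec (β : Fin 10 → ZMod 2) : d4Vec β ⬝ᵥ eBvec = ∑ j, β j := by
  simp only [d4Vec, eBvec_eq_ofCols, dotProduct_ofCols]
  refine sum_congr rfl fun j _ => ?_
  generalize β j = a
  unfold eBcol; split_ifs <;> revert a <;> decide

theorem mem_hatSet_iff {C : Set (Fin 10 → F)} {a : Fin 40 → ZMod 2} :
    a ∈ hatSet ω C ↔ ∃ c ∈ C, phiVec ω c = a := by
  refine ⟨fun ⟨c, hc, h⟩ => ⟨c, hc, ?_⟩, fun ⟨c, hc, h⟩ => ⟨c, hc, fun j k => ?_⟩⟩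
  · rw [eq_ofCols a]
    simp only [h, phiVec]
  · rw [← h, phiVec, ← colEquiv_apply, ofCols_apply_equiv]

theorem mem_d4ten_iff {b : Fin 40 → ZMod 2} : b ∈ d4ten ↔ ∃ β, d4Vec β = b := by
  refine ⟨fun h => ⟨fun j => b (idx j 0), ?_⟩, fun ⟨β, h⟩ j k k' => ?_⟩
  · conv_rhs => rw [eq_ofCols b]
    exact congrArg (ofCols colEquiv) (funext fun j => funext fun k => h j 0 k)
  · simp only [← h, d4Vec, ← colEquiv_apply, ofCols_apply_equiv]

theorem eight_dvd_hammingNorm_d4Vec_iff (β : Fin 10 → ZMod 2) :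
    8 ∣ hammingNorm (d4Vec β) ↔ ∑ j, β j = 0 := by
  rw [hammingNorm_d4Vec, ← natCast_hammingNorm, ZMod.natCast_eq_zero_iff]
  omega

theorem mem_d4ten0_iff {b : Fin 40 → ZMod 2} :
    b ∈ d4ten0 ↔ ∃ β, ∑ j, β j = 0 ∧ d4Vec β = b := by
  simp only [d4ten0, Set.mem_ofPred_eq, mem_d4ten_iff]
  constructor
  · rintro ⟨⟨β, rfl⟩, h⟩
    exact ⟨β, (eight_dvd_hammingNorm_d4Vec_iff β).mp h, rfl⟩
  · rintro ⟨β, hβ, rfl⟩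
    exact ⟨⟨β, rfl⟩, (eight_dvd_hammingNorm_d4Vec_iff β).mpr hβ⟩

theorem mem_zero_eBvec_iff {e : Fin 40 → ZMod 2} :
    e ∈ ({0, eBvec} : Set (Fin 40 → ZMod 2)) ↔ ∃ ε : ZMod 2, ε • eBvec = e := by
  constructor
  · rintro (rfl | rfl)
    exacts [⟨0, zero_smul _ _⟩, ⟨1, one_smul _ _⟩]
  · rintro ⟨ε, rfl⟩
    obtain rfl | rfl := zmod_two_eq_zero_or_one ε
    exacts [Or.inl (zero_smul _ _), Or.inr (one_smul _ _)]

@[simp] theorem d4Vec_zero : d4Vec 0 = 0 := rfl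

theorem d4Vec_add (β β' : Fin 10 → ZMod 2) : d4Vec (β + β') = d4Vec β + d4Vec β' := rfl

def encode (p : (Fin 10 → F) × (Fin 10 → ZMod 2) × ZMod 2) : Fin 40 → ZMod 2 :=
  phiVec ω p.1 + d4Vec p.2.1 + p.2.2 • eBvec

theorem rhoB_eq_image (C : Set (Fin 10 → F)) :
    rhoB ω C = encode ω '' (C ×ˢ {β | ∑ j, β j = 0} ×ˢ Set.univ) := by
  ext v
  simp only [rhoB, Set.mem_ofPred_eq, mem_hatSet_iff, mem_d4ten0_iff, mem_zero_eBvec_iff,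
    Set.mem_image, Set.mem_prod, Prod.exists, Set.mem_univ, and_true, encode]
  constructor
  · rintro ⟨_, ⟨c, hc, rfl⟩, _, ⟨β, hβ, rfl⟩, _, ⟨ε, rfl⟩, rfl⟩
    exact ⟨c, β, ε, ⟨hc, hβ⟩, rfl⟩
  · rintro ⟨c, β, ε, ⟨hc, hβ⟩, rfl⟩
    exact ⟨_, ⟨c, hc, rfl⟩, _, ⟨β, hβ, rfl⟩, _, ⟨ε, rfl⟩, rfl⟩

theorem encode_eq_ofCols (c : Fin 10 → F) (β : Fin 10 → ZMod 2) (ε : ZMod 2) :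
    encode ω (c, β, ε) = ofCols colEquiv fun j => phi ω (c j) + (fun _ => β j) + ε • eBcol j := by
  rw [encode, eBvec_eq_ofCols]
  rfl

theorem phiVec_zero : phiVec ω 0 = 0 := by
  funext i
  show phi ω 0 _ = 0
  rw [phi_zero, Pi.zero_apply]

theorem eight_le_hammingNorm_encode {C : Set (Fin 10 → F)}
    (hmin : ∀ c ∈ C, c ≠ 0 → 4 ≤ hammingNorm c) {c : Fin 10 → F} (hc : c ∈ C)
    {β : Fin 10 → ZMod 2} (hβ : ∑ j, β j = 0) {ε : ZMod 2} (hne : encode ω (c, β, ε) ≠ 0) :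
    8 ≤ hammingNorm (encode ω (c, β, ε)) := by
  obtain rfl | rfl := zmod_two_eq_zero_or_one ε
  · by_cases hc0 : c = 0
    · subst hc0
      have hv : encode ω (0, β, 0) = d4Vec β := by simp [encode, phiVec_zero]
      rw [hv] at hne ⊢
      have h8 := (eight_dvd_hammingNorm_d4Vec_iff β).mpr hβ
      have h0 := hammingNorm_ne_zero_iff.mpr hne
      omega
    · rw [encode_eq_ofCols, hammingNorm_ofCols]
      calc 8 ≤ 2 * hammingNorm c := by have := hmin c hc hc0; omega
        _ = ∑ j, if c j ≠ 0 then 2 else 0 := by rw [hammingNorm_eq_sum c, mul_sum]; simp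
        _ ≤ _ := sum_le_sum fun j _ => by
          split_ifs with h
          · simp [hammingNorm_phi_add_const h]
          · exact Nat.zero_le _
  · rw [encode_eq_ofCols, hammingNorm_ofCols]
    calc 8 ≤ ∑ _j : Fin 10, 1 := by simp
      _ ≤ _ := sum_le_sum fun j _ => by
        rw [Nat.one_le_iff_ne_zero, Ne, hammingNorm_eq_zero]
        intro h
        have := sum_phi_add_const_add_smul_eBcol (ω := ω) (c j) (β j) 1 j
        rw [h] at this
        simp only [Pi.zero_apply, sum_const_zero] at this
        exact zero_ne_one this

theorem four_dvd_hammingNorm_encode {c : Fin 10 → F} (hc : Even (hammingNorm c))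
    {β : Fin 10 → ZMod 2} (hβ : ∑ j, β j = 0) (ε : ZMod 2) :
    4 ∣ hammingNorm (encode ω (c, β, ε)) := by
  have h1 : 4 ∣ hammingNorm (phiVec ω c) := by
    obtain ⟨m, hm⟩ := hc
    rw [hammingNorm_phiVec, hm]
    exact ⟨m, by ring⟩
  have h2 : 4 ∣ hammingNorm (d4Vec β) :=
    dvd_trans ⟨2, rfl⟩ ((eight_dvd_hammingNorm_d4Vec_iff β).mpr hβ)
  have h3 : 4 ∣ hammingNorm (ε • eBvec) := by
    obtain rfl | rfl := zmod_two_eq_zero_or_one ε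
    · simp
    · simp [hammingNorm_eBvec]
  refine four_dvd_hammingNorm_add ?_ (four_dvd_hammingNorm_add ?_ h1 h2) h3
  · simp [add_dotProduct, dotProduct_smul, phiVec_dotProduct_eBvec, d4Vec_dotProduct_eBvec, hβ]
  · exact phiVec_dotProduct_d4Vec ω c β

variable [Fintype F] {ω} (hF : Fintype.card F = 4) (hω : ω ^ 2 = ω + 1)
include hF hω

theorem phiVec_dotProduct_phiVec_eq_zero_iff (c c' : Fin 10 → F) :
    phiVec ω c ⬝ᵥ phiVec ω c' = 0 ↔ traceIP c c' = 0 := by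
  have := CharTwo.of_one_ne_zero_of_two_eq_zero one_ne_zero (two_eq_zero_of_card_eq_four hF)
  have h : ZMod.castHom (dvd_refl 2) F (phiVec ω c ⬝ᵥ phiVec ω c') = traceIP c c' := by
    simp only [phiVec, dotProduct_ofCols, map_sum, ZMod.castHom_apply,
      cast_dotProduct_phi hF hω, traceIP]
  rw [← h, map_eq_zero_iff _ (ZMod.castHom_injective F)]

theorem encode_dotProduct_encode {c c' : Fin 10 → F} (hcc' : traceIP c c' = 0)
    {β β' : Fin 10 → ZMod 2} (hβ : ∑ j, β j = 0) (hβ' : ∑ j, β' j = 0) (ε ε' : ZMod 2) :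
    encode ω (c, β, ε) ⬝ᵥ encode ω (c', β', ε') = 0 := by
  simp only [encode, add_dotProduct, dotProduct_add, smul_dotProduct, dotProduct_smul,
    dotProduct_comm (d4Vec β) (phiVec ω c'), dotProduct_comm eBvec,
    (phiVec_dotProduct_phiVec_eq_zero_iff hF hω c c').mpr hcc', phiVec_dotProduct_d4Vec,
    phiVec_dotProduct_eBvec, d4Vec_dotProduct_d4Vec, d4Vec_dotProduct_eBvec,
    eBvec_dotProduct_eBvec, hβ, hβ', smul_zero, add_zero]

theorem phiVec_add (c c' : Fin 10 → F) : phiVec ω (c + c') = phiVec ω c + phiVec ω c' := by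
  simp only [phiVec, Pi.add_apply, phi_add hF hω]
  rfl

theorem encode_add (p q : (Fin 10 → F) × (Fin 10 → ZMod 2) × ZMod 2) :
    encode ω (p + q) = encode ω p + encode ω q := by
  simp only [encode, Prod.fst_add, Prod.snd_add, phiVec_add hF hω, d4Vec_add, add_smul]
  abel

theorem encode_injective : Function.Injective (encode ω) := by
  let E := AddMonoidHom.mk' (encode ω) (encode_add hF hω)
  refine (injective_iff_map_eq_zero E).mpr ?_
  rintro ⟨c, β, ε⟩ h
  have hcol : ∀ j, phi ω (c j) + (fun _ => β j) + ε • eBcol j = 0 := fun j => by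
    funext k
    simpa [E, encode_eq_ofCols] using congrFun h (colEquiv (j, k))
  have hε : ε = 0 := by
    rw [← sum_phi_add_const_add_smul_eBcol (ω := ω) (c 0) (β 0) ε 0, hcol 0]
    simp
  subst hε
  have hβ : β = 0 := funext fun j => by simpa [phi_apply_zero] using congrFun (hcol j) 0
  subst hβ
  have hc : c = 0 := funext fun j =>
    eq_zero_of_phi_eq_zero (funext fun k => by simpa using congrFun (hcol j) k)
  rw [hc]
  rfl

theorem natCard_rhoB {C : Set (Fin 10 → F)} (hcard : Nat.card C = 2 ^ 10) :
    Nat.card (rhoB ω C) = 2 ^ 20 := by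
  rw [rhoB_eq_image, Nat.card_image_of_injective (encode_injective hF hω),
    Nat.card_congr (Equiv.Set.prod _ _), Nat.card_prod, Nat.card_congr (Equiv.Set.prod _ _),
    Nat.card_prod, hcard, Nat.card_congr (sumEqZeroEquiv (ZMod 2) 9), Nat.card_univ]
  simp

theorem coe_span_rhoB {C : Set (Fin 10 → F)} (hzero : 0 ∈ C)
    (hadd : ∀ u ∈ C, ∀ v ∈ C, u + v ∈ C) :
    (Submodule.span (ZMod 2) (rhoB ω C) : Set (Fin 40 → ZMod 2)) = rhoB ω C := by
  rw [rhoB_eq_image]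
  refine coe_span_zmod_two_eq_self ⟨0, ⟨hzero, by simp, trivial⟩, ?_⟩ ?_
  · simp [encode, phiVec_zero]
  · rintro _ ⟨p, ⟨hc, hβ, -⟩, rfl⟩ _ ⟨q, ⟨hc', hβ', -⟩, rfl⟩
    refine ⟨p + q, ⟨hadd _ hc _ hc', ?_, trivial⟩, encode_add hF hω p q⟩
    simp [sum_add_distrib, hβ.out, hβ'.out]

theorem rhoB_dotProduct_eq_zero {C : Set (Fin 10 → F)}
    (hC : ∀ c ∈ C, ∀ c' ∈ C, traceIP c c' = 0) :
    ∀ v ∈ rhoB ω C, ∀ w ∈ rhoB ω C, v ⬝ᵥ w = 0 := by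
  rw [rhoB_eq_image]
  rintro _ ⟨⟨c, β, ε⟩, ⟨hc, hβ, -⟩, rfl⟩ _ ⟨⟨c', β', ε'⟩, ⟨hc', hβ', -⟩, rfl⟩
  exact encode_dotProduct_encode hF hω (hC c hc c' hc') hβ hβ' ε ε'

end Code

/-- If C is a Type II self-dual additive (10,2¹⁰) code over GF(4) of
minimum weight 4, then ρ_B(C) is a doubly-even self-dual binary [40,20,8] code. -/
theorem stmt_1 (F : Type) [Field F] [Fintype F] [DecidableEq F]
    (hF : Fintype.card F = 4) (ω : F) (hω : ω ^ 2 = ω + 1)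
    (C : Set (Fin 10 → F))
    (hzero : (0 : Fin 10 → F) ∈ C)
    (hadd : ∀ u ∈ C, ∀ v ∈ C, u + v ∈ C)
    (hcard : Nat.card C = 2 ^ 10)
    (hsd : C = addDual C)
    (hII : ∀ v ∈ C, Even (hammingNorm v))
    (hminlb : ∀ v ∈ C, v ≠ 0 → 4 ≤ hammingNorm v)
    (hminex : ∃ v ∈ C, hammingNorm v = 4) :
    ((Submodule.span (ZMod 2) (rhoB ω C) : Set (Fin 40 → ZMod 2)) = rhoB ω C ∧
      Module.finrank (ZMod 2) (Submodule.span (ZMod 2) (rhoB ω C)) = 20) ∧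
    rhoB ω C = binDual (rhoB ω C) ∧
    (∀ v ∈ rhoB ω C, 4 ∣ hammingNorm v) ∧
    (∀ v ∈ rhoB ω C, v ≠ 0 → 8 ≤ hammingNorm v) ∧
    (∃ v ∈ rhoB ω C, hammingNorm v = 8) := by
  have hρ := rhoB_eq_image ω C
  have hspan := coe_span_rhoB hF hω hzero hadd
  have hdim : Module.finrank (ZMod 2) (Submodule.span (ZMod 2) (rhoB ω C)) = 20 := by
    refine finrank_eq_of_natCard_eq_pow ?_
    rw [Nat.card_zmod, ← natCard_rhoB hF hω hcard]
    exact Nat.card_congr (Equiv.setCongr hspan)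
  have hortho := rhoB_dotProduct_eq_zero hF hω fun c hc => (hsd ▸ hc : c ∈ addDual C)
  refine ⟨⟨hspan, hdim⟩, ?_, ?_, ?_, ?_⟩
  · rw [← hspan]
    refine coe_eq_setOf_dotProduct_eq_zero (fun x hx y hy => ?_) (by simp [hdim])
    rw [← SetLike.mem_coe, hspan] at hx hy
    exact hortho x hx y hy
  · rw [hρ]
    rintro _ ⟨⟨c, β, ε⟩, ⟨hc, hβ, -⟩, rfl⟩
    exact four_dvd_hammingNorm_encode ω (hII c hc) hβ ε
  · rw [hρ]
    rintro _ ⟨⟨c, β, ε⟩, ⟨hc, hβ, -⟩, rfl⟩ hne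
    exact eight_le_hammingNorm_encode ω hminlb hc hβ hne
  · obtain ⟨c, hc, hwt⟩ := hminex
    refine ⟨encode ω (c, 0, 0), hρ ▸ ⟨_, ⟨hc, by simp, trivial⟩, rfl⟩, ?_⟩
    simp [encode, hammingNorm_phiVec, hwt]
end

section
/- For any additive code C of length 10 over GF(4), any a ∈ Ĉ, any b ∈ (d_4^{10})_0, and c = 1000 1000 1000 1000 1000 1000 1000 1000 1000 1000 ∈ 𝔽₂^40, each of the ten 4-coordinate columns d_i = {4i−3, 4i−2, 4i−1, 4i} (i = 1,…,10) of the vector a + b + c contains an odd number of ones (either 1 or 3); consequently the Hamming weight of a + b + c is at least 8. -/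
open scoped BigOperators

lemma phi_sum {F : Type} [Field F] [DecidableEq F] (ω x : F) :
    ∑ k, phi ω x k = 0 := by
  unfold phi
  split_ifs <;> simp [Fin.sum_univ_four] <;> decide

lemma colpar_one {F : Type} [Field F] [DecidableEq F]
    (ω : F) (C : Set (Fin 10 → F))
    (a : Fin 40 → ZMod 2) (ha : a ∈ hatSet ω C)
    (b : Fin 40 → ZMod 2) (hb : b ∈ d4ten0) (j : Fin 10) :
    ∑ k, (a + b + eCvec) (idx j k) = 1 := by
  obtain ⟨c, _, hac⟩ := ha
  have hsa : ∑ k, a (idx j k) = 0 := by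
    calc ∑ k, a (idx j k) = ∑ k, phi ω (c j) k := by
          exact Finset.sum_congr rfl fun k _ => hac j k
      _ = 0 := phi_sum ω (c j)
  have hsb : ∑ k, b (idx j k) = 0 := by
    have hc : ∀ k : Fin 4, b (idx j k) = b (idx j 0) := fun k => hb.1 j k 0
    rw [Fin.sum_univ_four, hc 1, hc 2, hc 3]
    have : ∀ x : ZMod 2, x + x + x + x = 0 := by decide
    exact this _
  have hse : ∑ k, eCvec (idx j k) = 1 := by
    simp only [eCvec, idx, Nat.mul_add_mod]
    decide
  simp only [Pi.add_apply, Finset.sum_add_distrib, hsa, hsb, hse]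
  simp

lemma card_odd (v : Fin 4 → ZMod 2) (h : ∑ k, v k = 1) :
    ({k | v k = 1} : Finset (Fin 4)).card = 1 ∨
    ({k | v k = 1} : Finset (Fin 4)).card = 3 := by
  have key : ((({k | v k = 1} : Finset (Fin 4)).card : ZMod 2)) = 1 := by
    have h1 : ∑ k ∈ ({k | v k = 1} : Finset (Fin 4)), v k
        = (({k | v k = 1} : Finset (Fin 4)).card : ZMod 2) := by
      rw [Finset.sum_congr rfl (fun k hk => by
        simpa using (Finset.mem_filter.mp hk).2)]
      simp
    have h2 : ∑ k ∈ (Finset.univ.filter fun k => ¬ v k = 1), v k = 0 := by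
      apply Finset.sum_eq_zero
      intro k hk
      have := (Finset.mem_filter.mp hk).2
      revert this; generalize v k = x; revert x; decide
    have hsplit := Finset.sum_filter_add_sum_filter_not Finset.univ (fun k => v k = 1) v
    rw [h1, h2, add_zero, h] at hsplit
    exact hsplit
  have hle : ({k | v k = 1} : Finset (Fin 4)).card ≤ 4 := by
    have := Finset.card_filter_le (Finset.univ : Finset (Fin 4)) (fun k => v k = 1)
    simpa using this
  set n := ({k | v k = 1} : Finset (Fin 4)).card with hn
  interval_cases n <;> revert key <;> decide

/-- For an additive code C of length 10 over GF(4), any a ∈ Ĉ,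
b ∈ (d₄¹⁰)₀ and c = 1000 repeated ten times, every column of a + b + c contains
an odd number (1 or 3) of ones; consequently wt(a+b+c) ≥ 8. -/
theorem stmt_2 (F : Type) [Field F] [Fintype F] [DecidableEq F]
    (hF : Fintype.card F = 4) (ω : F) (hω : ω ^ 2 = ω + 1)
    (C : Set (Fin 10 → F))
    (hzero : (0 : Fin 10 → F) ∈ C)
    (hadd : ∀ u ∈ C, ∀ v ∈ C, u + v ∈ C)
    (a : Fin 40 → ZMod 2) (ha : a ∈ hatSet ω C)
    (b : Fin 40 → ZMod 2) (hb : b ∈ d4ten0) :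
    (∀ j : Fin 10,
      (Finset.univ.filter fun k : Fin 4 => (a + b + eCvec) (idx j k) = 1).card = 1 ∨
      (Finset.univ.filter fun k : Fin 4 => (a + b + eCvec) (idx j k) = 1).card = 3) ∧
    8 ≤ hammingNorm (a + b + eCvec) := by
  
  have hpar := colpar_one ω C a ha b hb
  have hcol : ∀ j : Fin 10,
      (Finset.univ.filter fun k : Fin 4 => (a + b + eCvec) (idx j k) = 1).card = 1 ∨
      (Finset.univ.filter fun k : Fin 4 => (a + b + eCvec) (idx j k) = 1).card = 3 :=
    fun j => card_odd _ (hpar j)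
  refine ⟨hcol, ?_⟩
  have hne : ∀ j : Fin 10, ∃ k : Fin 4, (a + b + eCvec) (idx j k) = 1 := by
    intro j
    have : 0 < (Finset.univ.filter fun k : Fin 4 => (a + b + eCvec) (idx j k) = 1).card := by
      rcases hcol j with h | h <;> omega
    obtain ⟨k, hk⟩ := Finset.card_pos.mp this
    exact ⟨k, (Finset.mem_filter.mp hk).2⟩
  choose k hk using hne
  have h10 : 10 ≤ hammingNorm (a + b + eCvec) := by
    unfold hammingNorm
    have hsub : ∀ j ∈ (Finset.univ : Finset (Fin 10)),
        idx j (k j) ∈ Finset.univ.filter (fun i => (a + b + eCvec) i ≠ 0) := by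
      intro j _
      simp only [Finset.mem_filter, Finset.mem_univ, true_and]
      rw [hk j]; exact one_ne_zero
    have := Finset.card_le_card_of_injOn (fun j : Fin 10 => idx j (k j)) hsub
      (fun j1 _ j2 _ h => by
        have h1 := (k j1).isLt
        have h2 := (k j2).isLt
        have : 4 * j1.val + (k j1).val = 4 * j2.val + (k j2).val :=
          congrArg Fin.val h
        exact Fin.ext (by omega))
    simpa using this
  omega
end

section
/- The code B_10, the 𝔽₄-span of the five vectors (1,1,1,1,0,0,0,0,0,0), (0,1,ω,ϖ,1,0,0,0,0,0), (0,0,0,0,0,1,1,1,1,0), (0,0,0,0,0,0,1,ω,ϖ,1), (0,1,ϖ,ω,0,0,1,ϖ,ω,0) in GF(4)^{10}, is a Hermitian self-dual [10,5,4] linear code over GF(4): it has 𝔽₄-dimension 5, equals its dual under the Hermitian inner product, and its minimum nonzero Hamming weight is 4. -/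
open scoped BigOperators

/-!
Model GF(4) by `ZMod 2 × ZMod 2`. In a field of characteristic 2 with `ω² = ω + 1` this model
embeds additively and multiplicatively, bijectively when the field has four elements, so every
finite check on the generators of `B₁₀` is done by `decide` in the model.

The generators are pairwise Hermitian-orthogonal, and five vectors supported on the coordinates
0, 4, 5, 6, 9 pair with them to the identity matrix. This makes the generators linearly
independent and `x ↦ (⟨x, g_b⟩)_b` surjective, so the Hermitian dual of the code has dimension
`10 - 5 = 5`; it contains the code, hence equals it. The minimum weight is found by enumerating
the `4⁵` codewords.
-/

/-- `(a, b)` stands for `a + b ω`; `mul` reduces with `ω² = ω + 1`. -/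
abbrev G4 : Type := ZMod 2 × ZMod 2

namespace G4

def mul (x y : G4) : G4 :=
  (x.1 * y.1 + x.2 * y.2, x.1 * y.2 + x.2 * y.1 + x.2 * y.2)

def herm (u v : Fin 10 → G4) : G4 := ∑ i, mul (u i) (mul (v i) (v i))

end G4

def b10Gen : Fin 5 → Fin 10 → G4 :=
  ![![(1,0),(1,0),(1,0),(1,0),(0,0),(0,0),(0,0),(0,0),(0,0),(0,0)],
    ![(0,0),(1,0),(0,1),(1,1),(1,0),(0,0),(0,0),(0,0),(0,0),(0,0)],
    ![(0,0),(0,0),(0,0),(0,0),(0,0),(1,0),(1,0),(1,0),(1,0),(0,0)],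
    ![(0,0),(0,0),(0,0),(0,0),(0,0),(0,0),(1,0),(0,1),(1,1),(1,0)],
    ![(0,0),(1,0),(1,1),(0,1),(0,0),(0,0),(1,0),(1,1),(0,1),(0,0)]]

def b10Dual : Fin 5 → Fin 10 → G4 :=
  ![![(1,0),(0,0),(0,0),(0,0),(0,0),(0,0),(0,0),(0,0),(0,0),(0,0)],
    ![(0,0),(0,0),(0,0),(0,0),(1,0),(0,0),(0,0),(0,0),(0,0),(0,0)],
    ![(0,0),(0,0),(0,0),(0,0),(0,0),(1,0),(0,0),(0,0),(0,0),(0,0)],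
    ![(0,0),(0,0),(0,0),(0,0),(0,0),(0,0),(0,0),(0,0),(0,0),(1,0)],
    ![(0,0),(0,0),(0,0),(0,0),(0,0),(1,0),(1,0),(0,0),(0,0),(1,0)]]

/- Five scalar arguments rather than `c : Fin 5 → G4` keep the kernel enumeration below
cheap. -/
def b10Word (c₀ c₁ c₂ c₃ c₄ : G4) : Fin 10 → G4 := fun i =>
  G4.mul c₀ (b10Gen 0 i) + G4.mul c₁ (b10Gen 1 i) + G4.mul c₂ (b10Gen 2 i) +
    G4.mul c₃ (b10Gen 3 i) + G4.mul c₄ (b10Gen 4 i)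

theorem G4.herm_b10Gen_eq_zero : ∀ a b, G4.herm (b10Gen a) (b10Gen b) = 0 := by decide

theorem G4.herm_b10Dual_b10Gen :
    ∀ a b, G4.herm (b10Dual a) (b10Gen b) = if a = b then (1, 0) else 0 := by decide

theorem four_le_hammingNorm_b10Word : ∀ c₀ c₁ c₂ c₃ c₄ : G4,
    b10Word c₀ c₁ c₂ c₃ c₄ ≠ 0 → 4 ≤ hammingNorm (b10Word c₀ c₁ c₂ c₃ c₄) := by decide

theorem hammingNorm_b10Gen_zero : hammingNorm (b10Gen 0) = 4 := by decide

theorem charP_two_of_card_eq_four {F : Type*} [Field F] [Fintype F]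
    (hF : Fintype.card F = 4) : CharP F 2 := by
  obtain ⟨p, hchar, n, hp, hcard⟩ := FiniteField.card' F
  have hp4 : p ∣ 2 ^ 2 := by
    rw [show (2 : ℕ) ^ 2 = 4 from rfl, ← hF, hcard]
    exact dvd_pow_self p n.ne_zero
  rwa [← (Nat.prime_dvd_prime_iff_eq hp Nat.prime_two).mp (hp.dvd_of_dvd_pow hp4)]

open Module Submodule

def hermForm {F ι : Type*} [Field F] [Fintype ι] (x y : ι → F) : F := ∑ i, x i * y i ^ 2

section HermForm

variable {F : Type} [Field F] {ι : Type*} [Fintype ι]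

theorem hermForm_sum_smul_left {k : ℕ} (y : Fin k → F) (d : Fin k → ι → F) (z : ι → F) :
    hermForm (∑ a, y a • d a) z = ∑ a, y a * hermForm (d a) z := by
  simp only [hermForm, Finset.sum_apply, Pi.smul_apply, smul_eq_mul, Finset.sum_mul,
    Finset.mul_sum]
  rw [Finset.sum_comm]
  exact Finset.sum_congr rfl fun a _ => Finset.sum_congr rfl fun i _ => by ring

def hermPairing {k : ℕ} (g : Fin k → ι → F) : (ι → F) →ₗ[F] (Fin k → F) where
  toFun x b := hermForm x (g b)
  map_add' x y := funext fun b => by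
    simp only [hermForm, Pi.add_apply, add_mul, Finset.sum_add_distrib]
  map_smul' a x := funext fun b => by
    simp only [hermForm, Pi.smul_apply, smul_eq_mul, mul_assoc, Finset.mul_sum,
      RingHom.id_apply]

@[simp]
theorem hermForm_zero_right (x : ι → F) : hermForm x 0 = 0 := by
  simp [hermForm]

theorem hermForm_smul_right (x y : ι → F) (a : F) :
    hermForm x (a • y) = a ^ 2 * hermForm x y := by
  simp only [hermForm, Pi.smul_apply, smul_eq_mul, Finset.mul_sum]
  exact Finset.sum_congr rfl fun i _ => by ring

variable [CharP F 2]

theorem hermForm_add_right (x y z : ι → F) :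
    hermForm x (y + z) = hermForm x y + hermForm x z := by
  simp only [hermForm, Pi.add_apply, add_pow_char, mul_add, Finset.sum_add_distrib]

theorem hermForm_sum_smul_right {k : ℕ} (x : ι → F) (c : Fin k → F) (g : Fin k → ι → F) :
    hermForm x (∑ a, c a • g a) = ∑ a, c a ^ 2 * hermForm x (g a) := by
  simp_rw [← hermForm_smul_right]
  exact map_sum (AddMonoidHom.mk' (hermForm x) (hermForm_add_right x)) _ _

end HermForm

section DualFamily

variable {F : Type} [Field F] {ι : Type*} [Fintype ι] {k : ℕ} {g d : Fin k → ι → F}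
  (hd : ∀ a b, hermForm (d a) (g b) = if a = b then 1 else 0)
include hd

theorem hermPairing_surjective : Function.Surjective (hermPairing g) := fun y =>
  ⟨∑ a, y a • d a, funext fun b => by
    simp only [hermPairing, LinearMap.coe_mk, AddHom.coe_mk, hermForm_sum_smul_left, hd,
      mul_ite, mul_one, mul_zero, Finset.sum_ite_eq', Finset.mem_univ, if_true]⟩

theorem linearIndependent_of_hermForm_eq_ite [CharP F 2] : LinearIndependent F g := by
  refine Fintype.linearIndependent_iff.mpr fun c hc a => ?_
  have hca : c a ^ 2 = 0 := by
    simpa [hermForm_sum_smul_right, hd] using congrArg (hermForm (d a)) hc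
  exact pow_eq_zero_iff two_ne_zero |>.mp hca

theorem finrank_ker_hermPairing :
    finrank F (LinearMap.ker (hermPairing g)) = Fintype.card ι - k := by
  have h := LinearMap.finrank_range_add_finrank_ker (hermPairing g)
  rw [LinearMap.range_eq_top.mpr (hermPairing_surjective hd), finrank_top,
    finrank_fin_fun, finrank_fintype_fun_eq_card] at h
  omega

end DualFamily

section HermDual

variable {F : Type} [Field F] [CharP F 2]

theorem mem_hermDual_span_iff (s : Set (Fin 10 → F)) (x : Fin 10 → F) :
    x ∈ hermDual (span F s : Set (Fin 10 → F)) ↔ ∀ c ∈ s, hermForm x c = 0 := by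
  refine ⟨fun hx c hc => hx c (subset_span hc), fun hx c hc => ?_⟩
  show hermForm x c = 0
  induction hc using Submodule.span_induction with
  | mem c hc => exact hx c hc
  | zero => exact hermForm_zero_right x
  | add y z _ _ hy hz => rw [hermForm_add_right, hy, hz, add_zero]
  | smul a y _ hy => rw [hermForm_smul_right, hy, mul_zero]

theorem hermDual_span_range_eq_ker {k : ℕ} (g : Fin k → Fin 10 → F) :
    hermDual (span F (Set.range g) : Set (Fin 10 → F)) = LinearMap.ker (hermPairing g) := by
  ext x
  simp only [mem_hermDual_span_iff, Set.forall_mem_range, SetLike.mem_coe, LinearMap.mem_ker,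
    funext_iff]
  rfl

theorem coe_span_eq_hermDual_of_hermForm {g d : Fin 5 → Fin 10 → F}
    (hg : ∀ a b, hermForm (g a) (g b) = 0)
    (hd : ∀ a b, hermForm (d a) (g b) = if a = b then 1 else 0) :
    (span F (Set.range g) : Set (Fin 10 → F)) = hermDual (span F (Set.range g) : Set _) := by
  have hle : span F (Set.range g) ≤ LinearMap.ker (hermPairing g) :=
    span_le.mpr <| Set.range_subset_iff.mpr fun a => funext fun b => hg a b
  rw [hermDual_span_range_eq_ker, Submodule.eq_of_le_of_finrank_le hle]
  rw [finrank_ker_hermPairing hd, finrank_span_eq_card (linearIndependent_of_hermForm_eq_ite hd)]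
  simp

end HermDual

namespace G4

variable {F : Type} [Field F] [CharP F 2]

def toF (ω : F) : G4 →+ F where
  toFun p := ZMod.castHom (dvd_refl 2) F p.1 + ZMod.castHom (dvd_refl 2) F p.2 * ω
  map_zero' := by simp
  map_add' p q := by simp only [Prod.fst_add, Prod.snd_add, map_add]; ring

theorem toF_apply (ω : F) (p : G4) :
    toF ω p = ZMod.castHom (dvd_refl 2) F p.1 + ZMod.castHom (dvd_refl 2) F p.2 * ω := rfl

variable {ω : F} (hω : ω ^ 2 = ω + 1)
include hω

theorem toF_mul (p q : G4) : toF ω (mul p q) = toF ω p * toF ω q := by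
  simp only [toF_apply, mul, map_add, map_mul]
  linear_combination -(ZMod.castHom (dvd_refl 2) F p.2 * ZMod.castHom (dvd_refl 2) F q.2) * hω

theorem toF_injective : Function.Injective (toF ω) := by
  have hω0 : ω ≠ 0 := by rintro rfl; simp at hω
  have hω1 : 1 ≠ ω := by rintro rfl; simp [CharTwo.add_self_eq_zero] at hω
  have hcases : ∀ p : G4, p = (0, 0) ∨ p = (1, 0) ∨ p = (0, 1) ∨ p = (1, 1) := by decide
  refine (injective_iff_map_eq_zero (toF ω)).mpr fun p h => ?_
  obtain rfl | rfl | rfl | rfl := hcases p <;>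
    simp [toF_apply, hω0, CharTwo.add_eq_zero, hω1] at h ⊢

theorem toF_surjective [Fintype F] (hF : Fintype.card F = 4) : Function.Surjective (toF ω) :=
  ((Fintype.bijective_iff_injective_and_card _).mpr ⟨toF_injective hω, by simp [hF]⟩).surjective

theorem hermForm_toF (u v : Fin 10 → G4) :
    hermForm (toF ω ∘ u) (toF ω ∘ v) = toF ω (herm u v) := by
  simp only [hermForm, herm, map_sum, toF_mul hω, Function.comp_apply, sq]

theorem hammingNorm_toF_comp [DecidableEq F] (w : Fin 10 → G4) :
    hammingNorm (toF ω ∘ w) = hammingNorm w :=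
  hammingNorm_comp (fun _ => toF ω) (fun _ => toF_injective hω) (fun _ => map_zero _)

theorem sum_smul_toF_comp_b10Gen (c : Fin 5 → G4) :
    ∑ b, toF ω (c b) • (toF ω ∘ b10Gen b) = toF ω ∘ b10Word (c 0) (c 1) (c 2) (c 3) (c 4) := by
  funext i
  simp only [Finset.sum_apply, Pi.smul_apply, smul_eq_mul, Function.comp_apply, b10Word,
    map_add, toF_mul hω, Fin.sum_univ_five]

end G4

theorem B10_eq_span_toF {F : Type} [Field F] [CharP F 2] {ω : F} (hω : ω ^ 2 = ω + 1) :
    B10 ω = span F (Set.range fun b => G4.toF ω ∘ b10Gen b) := by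
  have hgen : (fun b => G4.toF ω ∘ b10Gen b) =
      ![![1,1,1,1,0,0,0,0,0,0], ![0,1,ω,ω^2,1,0,0,0,0,0], ![0,0,0,0,0,1,1,1,1,0],
        ![0,0,0,0,0,0,1,ω,ω^2,1], ![0,1,ω^2,ω,0,0,1,ω^2,ω,0]] := by
    funext b i
    fin_cases b <;> fin_cases i <;> simp [b10Gen, G4.toF_apply, hω, add_comm]
  rw [B10, hgen]
  simp only [Matrix.range_cons, Matrix.range_empty, Set.union_empty, Set.singleton_union]

theorem four_le_hammingNorm_of_mem_B10 {F : Type} [Field F] [Fintype F] [DecidableEq F]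
    [CharP F 2] (hF : Fintype.card F = 4) {ω : F} (hω : ω ^ 2 = ω + 1) {v : Fin 10 → F}
    (hv : v ∈ B10 ω) (hv0 : v ≠ 0) : 4 ≤ hammingNorm v := by
  rw [B10_eq_span_toF hω, mem_span_range_iff_exists_fun] at hv
  obtain ⟨a, rfl⟩ := hv
  choose c hc using fun b => G4.toF_surjective hω hF (a b)
  obtain rfl : a = fun b => G4.toF ω (c b) := funext fun b => (hc b).symm
  rw [G4.sum_smul_toF_comp_b10Gen hω] at hv0 ⊢
  rw [G4.hammingNorm_toF_comp hω]
  exact four_le_hammingNorm_b10Word _ _ _ _ _ fun h =>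
    hv0 (by rw [h]; exact funext fun _ => map_zero _)

/-- B₁₀ is a Hermitian self-dual [10,5,4] linear code over GF(4). -/
theorem stmt_5 (F : Type) [Field F] [Fintype F] [DecidableEq F]
    (hF : Fintype.card F = 4) (ω : F) (hω : ω ^ 2 = ω + 1) :
    Module.finrank F ↥(B10 ω) = 5 ∧
    (B10 ω : Set (Fin 10 → F)) = hermDual (B10 ω : Set (Fin 10 → F)) ∧
    (∀ v ∈ B10 ω, v ≠ 0 → 4 ≤ hammingNorm v) ∧
    (∃ v ∈ B10 ω, hammingNorm v = 4) := by
  have := charP_two_of_card_eq_four hF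
  have hg (a b : Fin 5) : hermForm (G4.toF ω ∘ b10Gen a) (G4.toF ω ∘ b10Gen b) = 0 := by
    rw [G4.hermForm_toF hω, G4.herm_b10Gen_eq_zero, map_zero]
  have hd (a b : Fin 5) : hermForm (G4.toF ω ∘ b10Dual a) (G4.toF ω ∘ b10Gen b) =
      if a = b then 1 else 0 := by
    rw [G4.hermForm_toF hω, G4.herm_b10Dual_b10Gen]
    split_ifs <;> simp [G4.toF_apply]
  have hB := B10_eq_span_toF hω
  refine ⟨?_, ?_, fun v hv hv0 => four_le_hammingNorm_of_mem_B10 hF hω hv hv0, ?_⟩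
  · rw [hB, finrank_span_eq_card (linearIndependent_of_hermForm_eq_ite hd), Fintype.card_fin]
  · rw [hB]
    exact coe_span_eq_hermDual_of_hermForm hg hd
  · refine ⟨G4.toF ω ∘ b10Gen 0, hB ▸ subset_span (Set.mem_range_self 0), ?_⟩
    rw [G4.hammingNorm_toF_comp hω, hammingNorm_b10Gen_zero]
end

section
/- Let C be E_10 or B_10. A vector v ∈ 𝔽₂^40 belongs to ρ_B(C) if and only if the following three conditions hold: (i) Proj(v) ∈ C; (ii) the ten columns of the 4×10 array of v all have the same parity; (iii) the parity of the top row of the array of v equals the common column parity. -/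
open scoped BigOperators

set_option linter.unusedSectionVars false
set_option maxHeartbeats 1000000

namespace Stmt11Aux

variable {F : Type} [Field F] [Fintype F] [DecidableEq F]

lemma char2 (hF : Fintype.card F = 4) : (2:F) = 0 := by
  have h4 : ((Fintype.card F : ℕ) : F) = 0 := FiniteField.cast_card_eq_zero F
  rw [hF] at h4; norm_num at h4
  have : (2:F) * 2 = 0 := by linear_combination h4
  rcases mul_eq_zero.1 this with h | h <;> exact h

lemma addself (hF : Fintype.card F = 4) (x : F) : x + x = 0 := by
  rw [← two_mul, char2 hF, zero_mul]

lemma om0 (hF : Fintype.card F = 4) {ω : F} (hω : ω ^ 2 = ω + 1) : ω ≠ 0 := by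
  have h2 := char2 (F := F) hF
  intro h; exact one_ne_zero (show (1:F) = 0 by linear_combination (ω+1)*h - hω - ω*h2)

lemma om1 (hF : Fintype.card F = 4) {ω : F} (hω : ω ^ 2 = ω + 1) : ω ≠ 1 := by
  intro h; exact one_ne_zero (show (1:F) = 0 by linear_combination ω*h - hω)

lemma om20 (hF : Fintype.card F = 4) {ω : F} (hω : ω ^ 2 = ω + 1) : ω^2 ≠ 0 :=
  pow_ne_zero _ (om0 hF hω)

lemma om21 (hF : Fintype.card F = 4) {ω : F} (hω : ω ^ 2 = ω + 1) : ω^2 ≠ 1 := by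
  intro h; exact om0 hF hω (by linear_combination h - hω)

lemma om2w (hF : Fintype.card F = 4) {ω : F} (hω : ω ^ 2 = ω + 1) : ω^2 ≠ ω := by
  intro h; exact one_ne_zero (show (1:F) = 0 by linear_combination h - hω)

lemma sum_om (hF : Fintype.card F = 4) {ω : F} (hω : ω ^ 2 = ω + 1) : (1:F) + ω + ω^2 = 0 := by
  linear_combination hω + (ω+1) * char2 (F := F) hF

lemma cases4 (hF : Fintype.card F = 4) {ω : F} (hω : ω ^ 2 = ω + 1) (x : F) :
    x = 0 ∨ x = 1 ∨ x = ω ∨ x = ω^2 := by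
  have hs : ({0, 1, ω, ω^2} : Finset F) = Finset.univ := by
    apply Finset.eq_univ_of_card
    rw [hF]
    rw [Finset.card_insert_of_notMem (by simp [(om0 hF hω).symm, (om20 hF hω).symm]),
        Finset.card_insert_of_notMem (by simp [(om1 hF hω).symm, (om21 hF hω).symm]),
        Finset.card_insert_of_notMem (by simp [Ne.symm (om2w hF hω)]),
        Finset.card_singleton]
  have : x ∈ ({0, 1, ω, ω^2} : Finset F) := hs ▸ Finset.mem_univ x
  simpa using this

lemma z2cases (x : ZMod 2) : x = 0 ∨ x = 1 := by revert x; decide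

lemma b2f_add (hF : Fintype.card F = 4) (x y : ZMod 2) :
    (b2f (x + y) : F) = b2f x + b2f y := by
  rcases z2cases x with h | h <;> rcases z2cases y with h' | h' <;>
    subst h <;> subst h' <;> simp [b2f] <;>
    first
      | rfl
      | exact (addself hF 1).symm

lemma phi_row0 (ω : F) (x : F) : phi ω x 0 = 0 := by
  unfold phi; split_ifs <;> rfl

lemma phi_colsum (ω : F) (x : F) : ∑ k, phi ω x k = 0 := by
  unfold phi; split_ifs <;> decide

lemma phi_proj (hF : Fintype.card F = 4) {ω : F} (hω : ω ^ 2 = ω + 1) (x : F) :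
    b2f (phi ω x 1) * 1 + b2f (phi ω x 2) * ω + b2f (phi ω x 3) * ω ^ 2 = x := by
  have h1 := om0 hF hω; have h2 := om1 hF hω; have h3 := om20 hF hω
  have h4 := om21 hF hω; have h5 := om2w hF hω
  rcases cases4 hF hω x with h | h | h | h <;> rw [h]
  · simp [phi, b2f]
  · have : phi ω (1:F) = ![0,0,1,1] := by
      simp [phi, (one_ne_zero : (1:F) ≠ 0)]
    rw [this]; simp [b2f]
    linear_combination sum_om hF hω - addself hF 1
  · have : phi ω ω = ![0,1,0,1] := by
      simp [phi, h1, h2]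
    rw [this]; simp [b2f]
    linear_combination hω + addself hF 1
  · have : phi ω (ω^2) = ![0,1,1,0] := by
      simp [phi, h3, h4, h5]
    rw [this]; simp [b2f]
    linear_combination -hω

lemma proj_col_eq_zero (hF : Fintype.card F = 4) {ω : F} (hω : ω ^ 2 = ω + 1)
    (x y z : ZMod 2) (h : (b2f x : F) * 1 + b2f y * ω + b2f z * ω ^ 2 = 0) :
    y = x ∧ z = x := by
  have h1 := om0 hF hω; have h3 := om20 hF hω; have h6 := sum_om hF hω
  rcases z2cases x with hx | hx <;> rcases z2cases y with hy | hy <;>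
    rcases z2cases z with hz | hz <;> subst hx <;> subst hy <;> subst hz <;>
    simp [b2f] at h ⊢
  · exact h1 h
  · exact h1 h
  · exact one_ne_zero (show (1:F) = 0 by linear_combination h6 - h)
  · exact h1 (show ω = 0 by linear_combination h - hω - addself hF 1)
  · exact h3 (show ω^2 = 0 by linear_combination h + hω)

lemma idx_bij : Function.Bijective (fun p : Fin 10 × Fin 4 => idx p.1 p.2) := by
  constructor
  · decide
  · decide

lemma hamming_d4 (b : Fin 40 → ZMod 2) (hb : b ∈ d4ten) :
    hammingNorm b = 4 * ∑ j : Fin 10, (if b (idx j 0) ≠ 0 then 1 else 0) := by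
  unfold hammingNorm
  rw [Finset.card_filter]
  rw [← idx_bij.sum_comp (fun i => if b i ≠ 0 then (1:ℕ) else 0)]
  rw [Fintype.sum_prod_type, Finset.mul_sum]
  apply Finset.sum_congr rfl
  intro j _
  have hcol : ∀ k, b (idx j k) = b (idx j 0) := fun k => hb j k 0
  simp only [hcol, Finset.sum_const, Finset.card_univ, Fintype.card_fin, smul_eq_mul]

lemma topPar_d4 (b : Fin 40 → ZMod 2) (hb : b ∈ d4ten) :
    topPar b = 0 ↔ 8 ∣ hammingNorm b := by
  rw [hamming_d4 b hb]
  have hT : topPar b = ((∑ j : Fin 10, (if b (idx j 0) ≠ 0 then 1 else 0) : ℕ) : ZMod 2) := by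
    unfold topPar
    rw [Nat.cast_sum]
    apply Finset.sum_congr rfl
    intro j _
    rcases z2cases (b (idx j 0)) with h | h <;> rw [h] <;> simp
  rw [hT, ZMod.natCast_eq_zero_iff]
  omega

lemma Proj_add (hF : Fintype.card F = 4) (ω : F) (v w : Fin 40 → ZMod 2) :
    Proj ω (v + w) = Proj ω v + Proj ω w := by
  funext j
  simp only [Proj, Pi.add_apply, b2f_add (F := F) hF]
  ring

lemma colPar_add (v w : Fin 40 → ZMod 2) (j : Fin 10) :
    colPar (v + w) j = colPar v j + colPar w j := by
  simp [colPar, Finset.sum_add_distrib]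

lemma topPar_add (v w : Fin 40 → ZMod 2) :
    topPar (v + w) = topPar v + topPar w := by
  simp [topPar, Finset.sum_add_distrib]

lemma colPar_d4 (b : Fin 40 → ZMod 2) (hb : b ∈ d4ten) (j : Fin 10) : colPar b j = 0 := by
  unfold colPar
  rw [Fin.sum_univ_four, hb j 1 0, hb j 2 0, hb j 3 0]
  rcases z2cases (b (idx j 0)) with h | h <;> rw [h] <;> decide

lemma Proj_d4 (hF : Fintype.card F = 4) {ω : F} (hω : ω ^ 2 = ω + 1)
    (b : Fin 40 → ZMod 2) (hb : b ∈ d4ten) (j : Fin 10) : Proj ω b j = 0 := by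
  unfold Proj
  rw [hb j 1 3, hb j 2 3]
  rcases z2cases (b (idx j 3)) with h | h <;> rw [h] <;> simp [b2f]
  linear_combination sum_om hF hω

def hatVec (ω : F) (c : Fin 10 → F) : Fin 40 → ZMod 2 :=
  fun i => phi ω (c ⟨i.val / 4, by have := i.isLt; omega⟩) ⟨i.val % 4, by omega⟩

lemma hatVec_idx (ω : F) (c : Fin 10 → F) (j : Fin 10) (k : Fin 4) :
    hatVec ω c (idx j k) = phi ω (c j) k := by
  unfold hatVec idx
  have h1 : (4 * j.val + k.val) / 4 = j.val := by have := k.isLt; omega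
  have h2 : (4 * j.val + k.val) % 4 = k.val := by have := k.isLt; omega
  congr 1
  · congr 1
    exact Fin.ext h1
  · exact Fin.ext h2

lemma Proj_hatVec (hF : Fintype.card F = 4) {ω : F} (hω : ω ^ 2 = ω + 1)
    (c : Fin 10 → F) (j : Fin 10) : Proj ω (hatVec ω c) j = c j := by
  unfold Proj
  rw [hatVec_idx, hatVec_idx, hatVec_idx]
  exact phi_proj hF hω _

lemma colPar_hatVec (ω : F) (c : Fin 10 → F) (j : Fin 10) :
    colPar (hatVec ω c) j = 0 := by
  unfold colPar
  rw [Finset.sum_congr rfl fun k _ => hatVec_idx ω c j k]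
  exact phi_colsum ω _

lemma topPar_hatVec (ω : F) (c : Fin 10 → F) : topPar (hatVec ω c) = 0 := by
  unfold topPar
  rw [Finset.sum_congr rfl fun j _ => hatVec_idx ω c j 0]
  simp [phi_row0]

lemma colPar_eB (j : Fin 10) : colPar eBvec j = 1 := by revert j; decide

lemma topPar_eB : topPar eBvec = 1 := by decide

lemma Proj_zero (ω : F) (j : Fin 10) : Proj ω (0 : Fin 40 → ZMod 2) j = 0 := by
  simp [Proj, b2f]

lemma colPar_zero (j : Fin 10) : colPar (0 : Fin 40 → ZMod 2) j = 0 := by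
  simp [colPar]

lemma topPar_zero : topPar (0 : Fin 40 → ZMod 2) = 0 := by
  simp [topPar]

lemma eB1 (j : Fin 10) : eBvec (idx j 1) = if j.val = 9 then 1 else 0 := by
  revert j; decide

lemma eB2 (j : Fin 10) : eBvec (idx j 2) = if j.val = 9 then 1 else 0 := by
  revert j; decide

lemma eB3 (j : Fin 10) : eBvec (idx j 3) = if j.val = 9 then 1 else 0 := by
  revert j; decide

lemma Proj_eB (hF : Fintype.card F = 4) {ω : F} (hω : ω ^ 2 = ω + 1) (j : Fin 10) :
    Proj ω eBvec j = 0 := by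
  unfold Proj
  rw [eB1, eB2, eB3]
  by_cases hj : j.val = 9 <;> simp [hj, b2f]
  linear_combination sum_om hF hω

lemma eB_entries (j : Fin 10) :
    (eBvec (idx j 1) = eBvec (idx j 2) ∧ eBvec (idx j 2) = eBvec (idx j 3)) ∧
      eBvec (idx j 0) + eBvec (idx j 1) = 1 := by
  revert j; decide

lemma rhoB_char (hF : Fintype.card F = 4) {ω : F} (hω : ω ^ 2 = ω + 1)
    (C : Set (Fin 10 → F)) (v : Fin 40 → ZMod 2) :
    v ∈ rhoB ω C ↔
      Proj ω v ∈ C ∧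
      (∀ j j' : Fin 10, colPar v j = colPar v j') ∧
      (∀ j : Fin 10, topPar v = colPar v j) := by
  constructor
  · rintro ⟨A, ⟨c, hc, hA⟩, b, ⟨hb4, hb8⟩, e, he, rfl⟩
    simp only [Set.mem_insert_iff, Set.mem_singleton_iff] at he
    have hPA : ∀ j, Proj ω A j = c j := by
      intro j; unfold Proj; rw [hA j 1, hA j 2, hA j 3]; exact phi_proj hF hω _
    have hcA : ∀ j, colPar A j = 0 := by
      intro j; unfold colPar
      rw [Finset.sum_congr rfl fun k _ => hA j k]
      exact phi_colsum ω _
    have htA : topPar A = 0 := by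
      unfold topPar
      rw [Finset.sum_congr rfl fun j _ => hA j 0]
      simp [phi_row0]
    have htb : topPar b = 0 := (topPar_d4 b hb4).2 hb8
    have hPe : ∀ j, Proj ω e j = 0 := by
      rcases he with rfl | rfl
      · exact Proj_zero ω
      · exact Proj_eB hF hω
    have hce : ∀ j, ∀ j', colPar e j = colPar e j' := by
      rcases he with rfl | rfl
      · intro j j'; rw [colPar_zero, colPar_zero]
      · intro j j'; rw [colPar_eB, colPar_eB]
    have hte : ∀ j, topPar e = colPar e j := by
      rcases he with rfl | rfl
      · intro j; rw [topPar_zero, colPar_zero]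
      · intro j; rw [topPar_eB, colPar_eB]
    refine ⟨?_, ?_, ?_⟩
    · have : Proj ω (A + b + e) = c := by
        funext j
        rw [Proj_add hF, Proj_add hF]
        simp only [Pi.add_apply]
        rw [hPA j, Proj_d4 hF hω b hb4 j, hPe j, add_zero, add_zero]
      rw [this]; exact hc
    · intro j j'
      rw [colPar_add, colPar_add, colPar_add, colPar_add,
        hcA j, hcA j', colPar_d4 b hb4 j, colPar_d4 b hb4 j']
      simp [hce j j']
    · intro j
      rw [topPar_add, topPar_add, colPar_add, colPar_add,
        htA, htb, hcA j, colPar_d4 b hb4 j]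
      simp [hte j]
  · rintro ⟨hC, hcol, htop⟩
    set c : Fin 10 → F := Proj ω v with hcdef
    set A : Fin 40 → ZMod 2 := hatVec ω c with hAdef
    have hAmem : A ∈ hatSet ω C := ⟨c, hC, fun j k => hatVec_idx ω c j k⟩
    set w : Fin 40 → ZMod 2 := v + A with hwdef
    have hwproj : ∀ j, Proj ω w j = 0 := by
      intro j
      rw [hwdef, Proj_add hF]
      simp only [Pi.add_apply]
      rw [Proj_hatVec hF hω]
      exact addself hF _
    have hwrows : ∀ j, w (idx j 2) = w (idx j 1) ∧ w (idx j 3) = w (idx j 1) := by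
      intro j
      have h := hwproj j
      unfold Proj at h
      exact proj_col_eq_zero hF hω _ _ _ h
    have hwcol : ∀ j, colPar w j = colPar v j := by
      intro j
      rw [hwdef, colPar_add, colPar_hatVec, add_zero]
    have hwtop : topPar w = topPar v := by
      rw [hwdef, topPar_add, topPar_hatVec, add_zero]
    have hwc4 : ∀ j, w (idx j 0) + w (idx j 1) + w (idx j 1) + w (idx j 1) = colPar v j := by
      intro j
      rw [← hwcol j]
      unfold colPar
      rw [Fin.sum_univ_four, (hwrows j).1, (hwrows j).2]
    rcases z2cases (colPar v 0) with hp | hp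
    · -- even case : b := w, e := 0
      have hallcol : ∀ j, colPar v j = 0 := fun j => (hcol j 0).trans hp
      have hwd4 : w ∈ d4ten := by
        intro j k k'
        have key : ∀ x y : ZMod 2, x + y + y + y = 0 → x = y := by decide
        have h0 : w (idx j 0) = w (idx j 1) :=
          key _ _ (by rw [hwc4 j]; exact hallcol j)
        have hall : ∀ k : Fin 4, w (idx j k) = w (idx j 1) := by
          intro k
          fin_cases k
          · exact h0
          · rfl
          · exact (hwrows j).1
          · exact (hwrows j).2
        rw [hall k, hall k']
      have htw : topPar w = 0 := by
        rw [hwtop, htop 0, hp]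
      refine ⟨A, hAmem, w, ⟨hwd4, (topPar_d4 w hwd4).1 htw⟩, 0, Or.inl rfl, ?_⟩
      funext i
      simp only [Pi.add_apply, hwdef, Pi.zero_apply]
      have : ∀ x y : ZMod 2, x + (y + x) + 0 = y := by decide
      exact (this (A i) (v i)).symm
    · -- odd case : b := w + eBvec, e := eBvec
      have hallcol : ∀ j, colPar v j = 1 := fun j => (hcol j 0).trans hp
      set b : Fin 40 → ZMod 2 := w + eBvec with hbdef
      have hbd4 : b ∈ d4ten := by
        intro j k k'
        obtain ⟨⟨he12, he23⟩, he01⟩ := eB_entries j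
        have key : ∀ w0 w1 e0 e1 : ZMod 2,
            w0 + w1 + w1 + w1 = 1 → e0 + e1 = 1 → w0 + e0 = w1 + e1 := by decide
        have h0 : b (idx j 0) = b (idx j 1) := by
          simp only [hbdef, Pi.add_apply]
          exact key _ _ _ _ (by rw [hwc4 j]; exact hallcol j) he01
        have hall : ∀ k : Fin 4, b (idx j k) = b (idx j 1) := by
          intro k
          fin_cases k
          · exact h0
          · rfl
          · show w (idx j 2) + eBvec (idx j 2) = w (idx j 1) + eBvec (idx j 1)
            rw [(hwrows j).1, he12]
          · show w (idx j 3) + eBvec (idx j 3) = w (idx j 1) + eBvec (idx j 1)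
            rw [(hwrows j).2, he12.trans he23]
        rw [hall k, hall k']
      have htb : topPar b = 0 := by
        rw [hbdef, topPar_add, topPar_eB, hwtop, htop 0, hp]
        decide
      refine ⟨A, hAmem, b, ⟨hbd4, (topPar_d4 b hbd4).1 htb⟩, eBvec, Or.inr rfl, ?_⟩
      funext i
      simp only [Pi.add_apply, hbdef, hwdef]
      have : ∀ x y z : ZMod 2, x + (y + x + z) + z = y := by decide
      exact (this (A i) (v i) (eBvec i)).symm

end Stmt11Aux

/-- For C = E₁₀ or B₁₀, v ∈ ρ_B(C) iff Proj(v) ∈ C, all ten column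
parities agree, and the top-row parity equals the common column parity. -/
theorem stmt_11 (F : Type) [Field F] [Fintype F] [DecidableEq F]
    (hF : Fintype.card F = 4) (ω : F) (hω : ω ^ 2 = ω + 1) :
    ∀ C ∈ ({(E10 ω : Set (Fin 10 → F)),
            (B10 ω : Set (Fin 10 → F))} : Set (Set (Fin 10 → F))),
      ∀ v : Fin 40 → ZMod 2,
        v ∈ rhoB ω C ↔
          Proj ω v ∈ C ∧
          (∀ j j' : Fin 10, colPar v j = colPar v j') ∧
          (∀ j : Fin 10, topPar v = colPar v j) := by
  intro C _ v
  exact Stmt11Aux.rhoB_char hF hω C v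
end
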